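/- Let a > 0, b > 0, ε > 0 with a + ε < b. There exists δ_0 > 0 (depending only on a, b, ε) such that for every δ with 0 < δ ≤ δ_0 and every w ≥ 0, 2b ∫_{(b/(b-a-ε)) w + δ^{-1}}^{∞} v · e^{ε v^2} e^{a v^2} e^{-b v^2} e^{-b w^2} I_0(2 b v w) dv ≤ δ · ( b/(b-a-ε) ) · exp( ((a+ε)b/(b-a-ε)) w^2 ). -/

import Mathlib

/-! Write `c = b - a - ε` and `m = b w / c`. Completing the square turns the integrand into
`e^{(a+ε) b w² / c} · e^{-c (v - m)²} · v I₀(2bvw) e^{-2bvw}`. From `cos φ ≤ 1 - 2φ²/π²` and the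
Gaussian integral, `I₀(y) e^{-y} ≤ √(2 / (1 + y))`; since `2bvw ≥ 2c m²` for `v ≥ m`, this gives
`v I₀(2bvw) e^{-2bvw} ≤ (√2 + 1/√c) (v - m)` for `v ≥ m + 1`, uniformly in `w`. The remaining
Gaussian tail `∫_{m + 1/δ}^∞ (v - m) e^{-c (v - m)²} dv = e^{-c/δ²} / (2c)` is `O(δ²)`. -/

open MeasureTheory Real

/-- Modified Bessel function of the first kind of order zero,
`I₀(y) = (1/π) ∫_0^π e^{y cos φ} dφ`. -/
noncomputable def besselI0 (y : ℝ) : ℝ :=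
  (1 / Real.pi) * ∫ φ in (0:ℝ)..Real.pi, Real.exp (y * Real.cos φ)

lemma besselI0_nonneg (y : ℝ) : 0 ≤ besselI0 y :=
  mul_nonneg (by positivity) <|
    intervalIntegral.integral_nonneg pi_pos.le fun _ _ ↦ (exp_pos _).le

lemma besselI0_le_exp {y : ℝ} (hy : 0 ≤ y) : besselI0 y ≤ exp y := by
  have hmono : ∫ φ in (0)..π, exp (y * cos φ) ≤ ∫ _ in (0)..π, exp y :=
    intervalIntegral.integral_mono_on pi_pos.le
      (Continuous.intervalIntegrable (by fun_prop) _ _) intervalIntegrable_const fun φ _ ↦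
      exp_le_exp.2 (by nlinarith [cos_le_one φ])
  calc besselI0 y ≤ 1 / π * ∫ _ in (0)..π, exp y := by
        rw [besselI0]; gcongr 1 / π * ?_
    _ = exp y := by
        rw [intervalIntegral.integral_const, smul_eq_mul, sub_zero]
        field_simp

lemma besselI0_le_exp_div_sqrt {y : ℝ} (hy : 0 < y) : besselI0 y ≤ exp y / √y := by
  set s := 2 / π ^ 2 * y with hs_def
  have hs : 0 < s := by positivity
  have hpoint : ∀ φ ∈ Set.Icc 0 π, exp (y * cos φ) ≤ exp y * exp (-s * φ ^ 2) := by
    intro φ hφ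
    rw [← exp_add, exp_le_exp]
    have := cos_le_one_sub_mul_cos_sq (x := φ) (by rw [abs_of_nonneg hφ.1]; exact hφ.2)
    nlinarith
  have hgauss : ∫ φ in (0)..π, exp (-s * φ ^ 2) ≤ √(π / s) / 2 := by
    rw [← integral_gaussian_Ioi, intervalIntegral.integral_of_le pi_pos.le]
    exact setIntegral_mono_set (integrable_exp_neg_mul_sq hs).integrableOn
      (.of_forall fun _ ↦ (exp_pos _).le) Set.Ioc_subset_Ioi_self.eventuallyLE
  have hconst : 1 / π * (√(π / s) / 2) ≤ 1 / √y :=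
    calc 1 / π * (√(π / s) / 2) = √(π / s) / √((2 * π) ^ 2) := by
          rw [sqrt_sq (by positivity)]; ring
      _ = √(π / s / (2 * π) ^ 2) := (sqrt_div' _ (by positivity)).symm
      _ ≤ √(1 / y) := by
          apply sqrt_le_sqrt
          rw [hs_def, div_le_div_iff₀ (by positivity) hy]
          field_simp
          nlinarith [pi_le_four, pi_pos]
      _ = 1 / √y := by rw [sqrt_div' _ hy.le, sqrt_one]
  calc besselI0 y ≤ 1 / π * (exp y * ∫ φ in (0)..π, exp (-s * φ ^ 2)) := by
        rw [besselI0, ← intervalIntegral.integral_const_mul (exp y)]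
        gcongr 1 / π * ?_
        exact intervalIntegral.integral_mono_on pi_pos.le
          (Continuous.intervalIntegrable (by fun_prop) _ _)
          (Continuous.intervalIntegrable (by fun_prop) _ _) hpoint
    _ ≤ 1 / π * (exp y * (√(π / s) / 2)) := by gcongr
    _ = exp y * (1 / π * (√(π / s) / 2)) := by ring
    _ ≤ exp y * (1 / √y) := by gcongr
    _ = exp y / √y := by ring

lemma besselI0_le_sqrt_mul_exp {y : ℝ} (hy : 0 ≤ y) :
    besselI0 y ≤ √(2 / (1 + y)) * exp y := by
  rcases le_or_gt y 1 with hy1 | hy1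
  · calc besselI0 y ≤ 1 * exp y := by rw [one_mul]; exact besselI0_le_exp hy
      _ ≤ √(2 / (1 + y)) * exp y := by
          gcongr
          rw [one_le_sqrt, one_le_div (by positivity)]
          linarith
  · calc besselI0 y ≤ √(1 / y) * exp y := by
          rw [sqrt_div' _ (by positivity), sqrt_one, one_div_mul_eq_div]
          exact besselI0_le_exp_div_sqrt (by positivity)
      _ ≤ √(2 / (1 + y)) * exp y := by
          gcongr ?_ * _
          apply sqrt_le_sqrt
          rw [div_le_div_iff₀ (by positivity) (by positivity)]
          linarith

lemma sqrt_two_mul_div_sqrt_one_add_le {c m v y : ℝ} (hc : 0 < c) (hm : 0 ≤ m)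
    (hv : m + 1 ≤ v) (hy : 2 * c * m ^ 2 ≤ y) :
    √2 * v / √(1 + y) ≤ (√2 + 1 / √c) * (v - m) := by
  have hsq : 1 ≤ √(1 + y) := by rw [one_le_sqrt]; nlinarith
  have hm_le : m / √(1 + y) ≤ 1 / √(2 * c) := by
    rw [div_le_div_iff₀ (by positivity) (by positivity), one_mul]
    calc m * √(2 * c) = √(2 * c * m ^ 2) := by
          rw [sqrt_mul' _ (sq_nonneg m), sqrt_sq hm, mul_comm]
      _ ≤ √(1 + y) := sqrt_le_sqrt (by linarith)
  have hsqrt_two : √2 * (1 / √(2 * c)) = 1 / √c := by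
    rw [sqrt_mul' _ hc.le]
    field_simp
  have hone : 1 / √c ≤ 1 / √c * (v - m) := le_mul_of_one_le_right (by positivity) (by linarith)
  calc √2 * v / √(1 + y) = √2 * ((v - m) / √(1 + y) + m / √(1 + y)) := by ring
    _ ≤ √2 * ((v - m) + 1 / √(2 * c)) := by
        gcongr
        exact div_le_self (by linarith) hsq
    _ ≤ (√2 + 1 / √c) * (v - m) := by linear_combination hone + hsqrt_two

lemma mul_besselI0_le {b c w v : ℝ} (hb : 0 ≤ b) (hc : 0 < c) (hw : 0 ≤ w)
    (hv : b / c * w + 1 ≤ v) :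
    v * besselI0 (2 * b * v * w) ≤ (√2 + 1 / √c) * (v - b / c * w) * exp (2 * b * v * w) := by
  have hm : 0 ≤ b / c * w := by positivity
  have hv0 : 0 ≤ v := by linarith
  have hy : 2 * c * (b / c * w) ^ 2 ≤ 2 * b * v * w := by
    have hcm : c * (b / c * w) = b * w := by field_simp
    have := mul_le_mul_of_nonneg_left (by linarith : b / c * w ≤ v) (by positivity : 0 ≤ 2 * b * w)
    nlinarith
  calc v * besselI0 (2 * b * v * w)
      ≤ v * (√2 / √(1 + 2 * b * v * w) * exp (2 * b * v * w)) := by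
        rw [← sqrt_div' _ (by positivity)]
        exact mul_le_mul_of_nonneg_left (besselI0_le_sqrt_mul_exp (by positivity)) hv0
    _ = √2 * v / √(1 + 2 * b * v * w) * exp (2 * b * v * w) := by ring
    _ ≤ (√2 + 1 / √c) * (v - b / c * w) * exp (2 * b * v * w) := by
        gcongr
        exact sqrt_two_mul_div_sqrt_one_add_le hc hm hv hy

lemma integral_Ioi_sub_mul_exp_neg_mul_sub_sq {c : ℝ} (hc : 0 < c) (m T : ℝ) :
    ∫ v in Set.Ioi T, (v - m) * exp (-c * (v - m) ^ 2) = exp (-c * (T - m) ^ 2) / (2 * c) := by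
  have hderiv : ∀ v ∈ Set.Ici T, HasDerivAt (fun v ↦ -exp (-c * (v - m) ^ 2) / (2 * c))
      ((v - m) * exp (-c * (v - m) ^ 2)) v := by
    intro v _
    have hsq : HasDerivAt (fun v ↦ -c * (v - m) ^ 2) (-c * (2 * (v - m))) v := by
      simpa using (((hasDerivAt_id v).sub_const m).pow 2).const_mul (-c)
    refine (hsq.exp.neg.div_const (2 * c)).congr_deriv ?_
    field_simp
  have hlim : Filter.Tendsto (fun v ↦ -exp (-c * (v - m) ^ 2) / (2 * c)) Filter.atTop
      (nhds 0) := by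
    have : Filter.Tendsto (fun v ↦ -c * (v - m) ^ 2) Filter.atTop Filter.atBot :=
      ((Filter.tendsto_pow_atTop two_ne_zero).comp
        (Filter.tendsto_atTop_add_const_right _ (-m) Filter.tendsto_id)).const_mul_atTop_of_neg
        (neg_lt_zero.2 hc)
    simpa using ((tendsto_exp_atBot.comp this).neg).div_const (2 * c)
  rw [integral_Ioi_of_hasDerivAt_of_tendsto' hderiv
    ((integrable_mul_exp_neg_mul_sq hc).comp_sub_right m).integrableOn hlim]
  ring

lemma exp_neg_le_inv {x : ℝ} (hx : 0 < x) : exp (-x) ≤ x⁻¹ := by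
  rw [exp_neg]
  exact inv_anti₀ hx (by linarith [add_one_le_exp x])

section

variable {a b ε c w : ℝ}

lemma exp_mul_besselI0_le (hb : 0 ≤ b) (hc : 0 < c) (hcab : c = b - a - ε) (hw : 0 ≤ w)
    {v : ℝ} (hv : b / c * w + 1 ≤ v) :
    v * exp (ε * v ^ 2) * exp (a * v ^ 2) * exp (-b * v ^ 2) * exp (-b * w ^ 2)
        * besselI0 (2 * b * v * w)
      ≤ (√2 + 1 / √c) * exp ((a + ε) * b / c * w ^ 2)
        * ((v - b / c * w) * exp (-c * (v - b / c * w) ^ 2)) := by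
  have hsquare : ε * v ^ 2 + a * v ^ 2 + -b * v ^ 2 + -b * w ^ 2
      = -c * (v - b / c * w) ^ 2 + (a + ε) * b / c * w ^ 2 - 2 * b * v * w := by
    subst hcab
    field_simp
    ring
  set m := b / c * w
  calc _ = exp (-c * (v - m) ^ 2 + (a + ε) * b / c * w ^ 2 - 2 * b * v * w)
        * (v * besselI0 (2 * b * v * w)) := by
        rw [← hsquare, exp_add, exp_add, exp_add]; ring
    _ ≤ exp (-c * (v - m) ^ 2 + (a + ε) * b / c * w ^ 2 - 2 * b * v * w)
        * ((√2 + 1 / √c) * (v - m) * exp (2 * b * v * w)) :=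
        mul_le_mul_of_nonneg_left (mul_besselI0_le hb hc hw hv) (exp_pos _).le
    _ = _ := by
        rw [exp_sub, exp_add]
        field_simp

lemma integral_Ioi_exp_mul_besselI0_le (hb : 0 ≤ b) (hc : 0 < c) (hcab : c = b - a - ε)
    (hw : 0 ≤ w) {δ : ℝ} (hδ : 0 < δ) (hδ₁ : δ ≤ 1) :
    ∫ v in Set.Ioi (b / c * w + δ⁻¹),
        v * exp (ε * v ^ 2) * exp (a * v ^ 2) * exp (-b * v ^ 2) * exp (-b * w ^ 2)
          * besselI0 (2 * b * v * w)
      ≤ (√2 + 1 / √c) * exp ((a + ε) * b / c * w ^ 2) * (exp (-c * (δ⁻¹) ^ 2) / (2 * c)) := by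
  set m := b / c * w
  have hm : 0 ≤ m := by positivity
  have hδ_inv : 1 ≤ δ⁻¹ := (one_le_inv₀ hδ).2 hδ₁
  calc _ ≤ ∫ v in Set.Ioi (m + δ⁻¹), (√2 + 1 / √c) * exp ((a + ε) * b / c * w ^ 2)
          * ((v - m) * exp (-c * (v - m) ^ 2)) := by
        refine integral_mono_of_nonneg ?_
          (((integrable_mul_exp_neg_mul_sq hc).comp_sub_right m).integrableOn.const_mul _)
          (ae_restrict_of_forall_mem measurableSet_Ioi fun v hv ↦
            exp_mul_besselI0_le hb hc hcab hw (by linarith [Set.mem_Ioi.1 hv]))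
        refine ae_restrict_of_forall_mem measurableSet_Ioi fun v hv ↦ ?_
        have : 0 ≤ v := by linarith [Set.mem_Ioi.1 hv]
        have := besselI0_nonneg (2 * b * v * w)
        positivity
    _ = _ := by
        rw [integral_const_mul, integral_Ioi_sub_mul_exp_neg_mul_sub_sq hc, add_sub_cancel_left]

end

lemma mul_exp_neg_mul_inv_sq_le {c K δ : ℝ} (hc : 0 < c) (hK : 0 < K) (hδ : 0 < δ)
    (hδK : δ ≤ c / K) : K * exp (-c * (δ⁻¹) ^ 2) ≤ δ :=
  calc K * exp (-c * (δ⁻¹) ^ 2) ≤ K * (c * (δ⁻¹) ^ 2)⁻¹ := by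
        rw [neg_mul]; gcongr; exact exp_neg_le_inv (by positivity)
    _ = K * δ / c * δ := by field_simp
    _ ≤ 1 * δ := by
        gcongr
        rwa [div_le_one hc, ← le_div_iff₀' hK]
    _ = δ := one_mul δ

theorem bessel_gaussian_tail_bound_small_general (a b ε : ℝ) (hb : 0 < b) (hab : a + ε < b) :
    ∃ δ₀ > (0:ℝ), ∀ δ : ℝ, 0 < δ → δ ≤ δ₀ → ∀ w : ℝ, 0 ≤ w →
      2 * b * ∫ v in Set.Ioi ((b / (b - a - ε)) * w + δ⁻¹),
          v * Real.exp (ε * v ^ 2) * Real.exp (a * v ^ 2) * Real.exp (-b * v ^ 2)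
            * Real.exp (-b * w ^ 2) * besselI0 (2 * b * v * w)
        ≤ δ * (b / (b - a - ε)) * Real.exp ((a + ε) * b / (b - a - ε) * w ^ 2) := by
  set c := b - a - ε with hc_def
  have hc : 0 < c := by linarith
  set K := √2 + 1 / √c
  have hK : 0 < K := by positivity
  -- `δ ≤ 1` puts the whole domain in `v ≥ m + 1`; `δ ≤ c / K` beats the factor `K`.
  refine ⟨min 1 (c / K), by positivity, fun δ hδ hδ₀ w hw ↦ ?_⟩
  set E := exp ((a + ε) * b / c * w ^ 2)
  have hsmall : K * exp (-c * (δ⁻¹) ^ 2) ≤ δ :=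
    mul_exp_neg_mul_inv_sq_le hc hK hδ (hδ₀.trans (min_le_right _ _))
  calc _ ≤ 2 * b * (K * E * (exp (-c * (δ⁻¹) ^ 2) / (2 * c))) := by
        gcongr
        exact integral_Ioi_exp_mul_besselI0_le hb.le hc hc_def hw hδ (hδ₀.trans (min_le_left _ _))
    _ = b / c * E * (K * exp (-c * (δ⁻¹) ^ 2)) := by field_simp
    _ ≤ b / c * E * δ := by gcongr
    _ = δ * (b / c) * E := by ring

/-- For `a, b, ε > 0` with `a + ε < b` there exists `δ₀ > 0` such that
for all `0 < δ ≤ δ₀` and all `w ≥ 0`,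
`2b ∫_{(b/(b-a-ε))w + δ⁻¹}^∞ v e^{εv²} e^{av²} e^{-bv²} e^{-bw²} I₀(2bvw) dv
  ≤ δ (b/(b-a-ε)) exp(((a+ε)b/(b-a-ε)) w²)`. -/
theorem bessel_gaussian_tail_bound_small (a b ε : ℝ) (ha : 0 < a) (hb : 0 < b)
    (hε : 0 < ε) (hab : a + ε < b) :
    ∃ δ₀ > (0:ℝ), ∀ δ : ℝ, 0 < δ → δ ≤ δ₀ → ∀ w : ℝ, 0 ≤ w →
      2 * b * ∫ v in Set.Ioi ((b / (b - a - ε)) * w + δ⁻¹),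
          v * Real.exp (ε * v ^ 2) * Real.exp (a * v ^ 2) * Real.exp (-b * v ^ 2)
            * Real.exp (-b * w ^ 2) * besselI0 (2 * b * v * w)
        ≤ δ * (b / (b - a - ε)) * Real.exp ((a + ε) * b / (b - a - ε) * w ^ 2) :=
  bessel_gaussian_tail_bound_small_general a b ε hb hab
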